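/- arXiv:2303.02538 — 5 statements merged into one kernel-verified Lean document; each statement's English description precedes it below -/
import Mathlib

section
/- Every position matrix is realizable: if X is an m×m matrix with nonnegative integer entries such that every row and every column sums to n, then there exists an election with m candidates and n voters whose position matrix equals X. -/
/-- Auxiliary: a doubly stochastic (scaled by `n ≥ 1`) nonnegative integer matrix
has a permutation hitting only positive entries. -/
theorem exists_perm_pos (m n : ℕ) (hn : 0 < n) (X : Fin m → Fin m → ℕ)
    (hrow : ∀ i : Fin m, ∑ j, X i j = n)
    (hcol : ∀ j : Fin m, ∑ i, X i j = n) :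
    ∃ σ : Equiv.Perm (Fin m), ∀ i, 0 < X i (σ i) := by
  set t : Fin m → Finset (Fin m) := fun i => Finset.univ.filter (fun j => X i j ≠ 0) with ht
  have hall : ∀ s : Finset (Fin m), s.card ≤ (s.biUnion t).card := by
    intro s
    have h1 : n * s.card ≤ n * (s.biUnion t).card := by
      calc n * s.card = ∑ _i ∈ s, n := by rw [Finset.sum_const, smul_eq_mul, mul_comm]
        _ = ∑ i ∈ s, ∑ j ∈ t i, X i j := by
            refine Finset.sum_congr rfl fun i _ => ?_
            rw [← hrow i, ht]
            exact (Finset.sum_filter_ne_zero _).symm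
        _ ≤ ∑ i ∈ s, ∑ j ∈ s.biUnion t, X i j := by
            exact Finset.sum_le_sum fun i hi =>
              Finset.sum_le_sum_of_subset (Finset.subset_biUnion_of_mem t hi)
        _ = ∑ j ∈ s.biUnion t, ∑ i ∈ s, X i j := Finset.sum_comm
        _ ≤ ∑ j ∈ s.biUnion t, n := by
            refine Finset.sum_le_sum fun j _ => ?_
            rw [← hcol j]
            exact Finset.sum_le_sum_of_subset (Finset.subset_univ s)
        _ = n * (s.biUnion t).card := by rw [Finset.sum_const, smul_eq_mul, mul_comm]
    exact Nat.le_of_mul_le_mul_left h1 hn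
  obtain ⟨f, hfinj, hf⟩ := (Finset.all_card_le_biUnion_card_iff_exists_injective t).mp hall
  have hbij : Function.Bijective f := Finite.injective_iff_bijective.mp hfinj
  refine ⟨Equiv.ofBijective f hbij, fun i => ?_⟩
  have h := hf i
  rw [ht] at h
  simp only [Finset.mem_filter, Finset.mem_univ, true_and] at h
  exact Nat.pos_of_ne_zero h

/-- Every position matrix is realizable: if `X` is an `m × m` matrix of
nonnegative integers whose every row and column sums to `n`, then there is an election
(a multiset of `n` votes, each a bijection from positions to candidates) whose position
matrix equals `X`. -/
theorem position_matrix_realizable (m n : ℕ) (X : Fin m → Fin m → ℕ)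
    (hrow : ∀ i : Fin m, ∑ j, X i j = n)
    (hcol : ∀ j : Fin m, ∑ i, X i j = n) :
    ∃ votes : Multiset (Equiv.Perm (Fin m)),
      Multiset.card votes = n ∧
      ∀ i j : Fin m, (votes.filter (fun v => v i = j)).card = X i j := by
  induction n generalizing X with
  | zero =>
    refine ⟨0, by simp, fun i j => ?_⟩
    have : X i j = 0 := by
      have := hrow i
      have hle : X i j ≤ ∑ j', X i j' := Finset.single_le_sum (fun _ _ => Nat.zero_le _)
        (Finset.mem_univ j)
      omega
    simp [this]
  | succ n ih =>
    obtain ⟨σ, hσ⟩ := exists_perm_pos m (n+1) (Nat.succ_pos n) X hrow hcol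
    set X' : Fin m → Fin m → ℕ := fun i j => X i j - (if σ i = j then 1 else 0) with hX'
    have hXe : ∀ i j, X' i j + (if σ i = j then 1 else 0) = X i j := by
      intro i j
      rw [hX']
      by_cases h : σ i = j
      · have := hσ i
        rw [h] at this
        simp [h]
        omega
      · simp [h]
    have hrow' : ∀ i, ∑ j, X' i j = n := by
      intro i
      have : ∑ j, (X' i j + (if σ i = j then 1 else 0)) = n + 1 := by
        rw [Finset.sum_congr rfl fun j _ => hXe i j]; exact hrow i
      rw [Finset.sum_add_distrib] at this
      have h1 : ∑ j, (if σ i = j then 1 else 0) = 1 := by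
        simp [Finset.sum_ite_eq]
      omega
    have hcol' : ∀ j, ∑ i, X' i j = n := by
      intro j
      have : ∑ i, (X' i j + (if σ i = j then 1 else 0)) = n + 1 := by
        rw [Finset.sum_congr rfl fun i _ => hXe i j]; exact hcol j
      rw [Finset.sum_add_distrib] at this
      have h1 : ∑ i, (if σ i = j then 1 else 0) = 1 := by
        have := Equiv.sum_comp σ (fun k => if k = j then (1:ℕ) else 0)
        rw [this]
        simp [Finset.sum_ite_eq]
      omega
    obtain ⟨votes', hcard', hfilt'⟩ := ih X' hrow' hcol'
    refine ⟨σ ::ₘ votes', by simp [hcard'], fun i j => ?_⟩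
    rw [Multiset.filter_cons]
    by_cases h : σ i = j
    · simp only [h, if_pos rfl]
      rw [Multiset.card_add, hfilt' i j]
      have := hXe i j
      simp [h] at this
      simp
      omega
    · simp only [if_neg h]
      rw [Multiset.card_add, hfilt' i j]
      have := hXe i j
      simp [h] at this
      simp
      omega
end

section
/- If E = (C, V) is a balanced group-separable election with |C| = 2^k candidates compatible with a binary tree T whose leaves in left-to-right order are c_1,...,c_{2^k}, then its position matrix X (columns ordered c_1,...,c_{2^k}) is evenly-quartered: the sum of entries of its upper-left quarter equals the sum of entries of its bottom-right quarter, and the sum of entries of its upper-right quarter equals the sum of entries of its bottom-left quarter. -/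
/-- A vote (bijection from positions to candidates, both `Fin (2^k)`) is compatible
with the complete binary tree whose leaves in order are the candidates iff for every
level `j` each aligned dyadic block of positions of size `2^j` is mapped onto an
aligned dyadic block of candidates of size `2^j`. -/
def BalancedCompatible (k : ℕ) (σ : Equiv.Perm (Fin (2 ^ k))) : Prop :=
  ∀ j ≤ k, ∀ t : ℕ, t < 2 ^ (k - j) →
    ∃ s : ℕ, s < 2 ^ (k - j) ∧ ∀ p : Fin (2 ^ k),
      (t * 2 ^ j ≤ (p : ℕ) ∧ (p : ℕ) < (t + 1) * 2 ^ j) →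
      (s * 2 ^ j ≤ ((σ p : Fin (2 ^ k)) : ℕ) ∧ ((σ p : Fin (2 ^ k)) : ℕ) < (s + 1) * 2 ^ j)

/-! A vote compatible with the balanced tree sends each of the two halves of the positions onto a
half of the candidates, so it either keeps the halves in place or swaps them. A quarter sum of the
position matrix counts, summed over the votes, the positions of one half sent to candidates of the
other (or the same) half. Per vote the two diagonal quarters thus both contribute `2 ^ (k - 1)` or
both `0`, and likewise the two off-diagonal quarters. -/

open Finset

theorem Multiset.sum_sum_card_filter_apply_eq_sum_map_card {γ α β : Type*} [DecidableEq β]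
    (votes : Multiset γ) (f : γ → α → β) (A : Finset α) (B : Finset β) :
    ∑ i ∈ A, ∑ j ∈ B, (votes.filter fun v => f v i = j).card
      = (votes.map fun v => #{i ∈ A | f v i ∈ B}).sum := by
  induction votes using Multiset.induction with
  | empty => simp
  | cons v votes ih =>
    simp only [Multiset.filter_cons, Multiset.card_add, Multiset.map_cons, Multiset.sum_cons,
      sum_add_distrib, ← ih]
    simp only [apply_ite Multiset.card, Multiset.card_singleton, Multiset.card_zero, sum_ite_eq,
      card_filter]

theorem Fin.card_filter_val_lt_eq_card_filter_le {n m : ℕ} (h : n = 2 * m) :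
    #{i : Fin n | (i : ℕ) < m} = #{i : Fin n | m ≤ (i : ℕ)} := by
  have hsplit :=
    card_filter_add_card_filter_not (s := (univ : Finset (Fin n))) (fun i => (i : ℕ) < m)
  simp only [not_lt, card_univ, Fintype.card_fin, Fin.card_filter_val_lt] at hsplit
  rw [Fin.card_filter_val_lt]
  omega

namespace BalancedCompatible

variable {k : ℕ} {σ : Equiv.Perm (Fin (2 ^ k))}

/-- `p / 2 ^ j` is the index of the dyadic block of size `2 ^ j` containing `p`. -/
theorem div_eq_div (hσ : BalancedCompatible k σ) {j : ℕ} (hj : j ≤ k) {p q : Fin (2 ^ k)}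
    (hpq : (p : ℕ) / 2 ^ j = q / 2 ^ j) : (σ p : ℕ) / 2 ^ j = (σ q : ℕ) / 2 ^ j := by
  have hpos : 0 < 2 ^ j := by positivity
  have hblock : (p : ℕ) / 2 ^ j < 2 ^ (k - j) := by
    rw [Nat.div_lt_iff_lt_mul hpos, ← pow_add, Nat.sub_add_cancel hj]
    exact p.isLt
  obtain ⟨s, -, hs⟩ := hσ j hj _ hblock
  have hσs : ∀ r : Fin (2 ^ k), (r : ℕ) / 2 ^ j = p / 2 ^ j → (σ r : ℕ) / 2 ^ j = s := by
    intro r hr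
    obtain ⟨hlo, hhi⟩ := hs r ⟨(Nat.le_div_iff_mul_le hpos).1 hr.ge,
      (Nat.div_lt_iff_lt_mul hpos).1 (hr ▸ Nat.lt_succ_self _)⟩
    exact Nat.div_eq_of_lt_le hlo hhi
  rw [hσs p rfl, hσs q hpq.symm]

theorem preserves_or_swaps_halves (hσ : BalancedCompatible k σ) (hk : 1 ≤ k) :
    (∀ p : Fin (2 ^ k), (σ p : ℕ) < 2 ^ (k - 1) ↔ (p : ℕ) < 2 ^ (k - 1)) ∨
      (∀ p : Fin (2 ^ k), (σ p : ℕ) < 2 ^ (k - 1) ↔ 2 ^ (k - 1) ≤ (p : ℕ)) := by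
  have hm : 0 < 2 ^ (k - 1) := by positivity
  have hkm : 2 ^ k = 2 * 2 ^ (k - 1) := by rw [← pow_succ', Nat.sub_add_cancel hk]
  have hblock := fun p q => hσ.div_eq_div (Nat.sub_le k 1) (p := p) (q := q)
  generalize 2 ^ (k - 1) = m at hm hkm hblock ⊢
  have hhalf (r : Fin (2 ^ k)) : (r : ℕ) / m < 2 :=
    (Nat.div_lt_iff_lt_mul hm).2 (by have := r.isLt; omega)
  have hsame : ∀ p q : Fin (2 ^ k),
      ((p : ℕ) < m ↔ (q : ℕ) < m) → ((σ p : ℕ) < m ↔ (σ q : ℕ) < m) := by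
    intro p q hpq
    simp only [← Nat.div_eq_zero_iff_lt hm] at hpq ⊢
    have hp := hhalf p
    have hq := hhalf q
    rw [hblock p q (by grind)]
  obtain ⟨a, ha⟩ : ∃ a, (σ a : ℕ) < m := ⟨σ.symm ⟨0, by omega⟩, by simp [hm]⟩
  obtain ⟨b, hb⟩ : ∃ b, ¬ (σ b : ℕ) < m := ⟨σ.symm ⟨m, by omega⟩, by simp⟩
  simp only [← not_lt]
  -- `a` and `b` lie in different halves, as their images do; every position shares a half
  -- with one of them.
  by_cases hlow : (a : ℕ) < m <;> [left; right] <;> intro p <;>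
    have := hsame p a <;> have := hsame p b <;> have := hsame a b <;> tauto

theorem card_quarters (hσ : BalancedCompatible k σ) (hk : 1 ≤ k) :
    #{i : Fin (2 ^ k) | (i : ℕ) < 2 ^ (k - 1) ∧ (σ i : ℕ) < 2 ^ (k - 1)}
        = #{i : Fin (2 ^ k) | 2 ^ (k - 1) ≤ (i : ℕ) ∧ 2 ^ (k - 1) ≤ (σ i : ℕ)} ∧
      #{i : Fin (2 ^ k) | (i : ℕ) < 2 ^ (k - 1) ∧ 2 ^ (k - 1) ≤ (σ i : ℕ)}
        = #{i : Fin (2 ^ k) | 2 ^ (k - 1) ≤ (i : ℕ) ∧ (σ i : ℕ) < 2 ^ (k - 1)} := by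
  have hhalves := Fin.card_filter_val_lt_eq_card_filter_le (n := 2 ^ k) (m := 2 ^ (k - 1))
    (by rw [← pow_succ', Nat.sub_add_cancel hk])
  rcases hσ.preserves_or_swaps_halves hk with h | h <;> simp only [← not_lt, h] <;>
    simp [hhalves, and_comm]

end BalancedCompatible

/-- the position matrix of a balanced group-separable election on
`2^k` candidates is evenly-quartered: the entry sum of the upper-left quarter equals
that of the bottom-right quarter, and the entry sum of the upper-right quarter equals
that of the bottom-left quarter. -/
theorem balanced_gs_evenly_quartered (k : ℕ) (hk : 1 ≤ k)
    (votes : Multiset (Equiv.Perm (Fin (2 ^ k))))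
    (hcomp : ∀ v ∈ votes, BalancedCompatible k v)
    (X : Fin (2 ^ k) → Fin (2 ^ k) → ℕ)
    (hX : ∀ i j, X i j = (votes.filter (fun v => v i = j)).card) :
    ((∑ i ∈ Finset.univ.filter (fun i : Fin (2 ^ k) => (i : ℕ) < 2 ^ (k - 1)),
        ∑ j ∈ Finset.univ.filter (fun j : Fin (2 ^ k) => (j : ℕ) < 2 ^ (k - 1)), X i j)
      = ∑ i ∈ Finset.univ.filter (fun i : Fin (2 ^ k) => 2 ^ (k - 1) ≤ (i : ℕ)),
          ∑ j ∈ Finset.univ.filter (fun j : Fin (2 ^ k) => 2 ^ (k - 1) ≤ (j : ℕ)), X i j) ∧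
    ((∑ i ∈ Finset.univ.filter (fun i : Fin (2 ^ k) => (i : ℕ) < 2 ^ (k - 1)),
        ∑ j ∈ Finset.univ.filter (fun j : Fin (2 ^ k) => 2 ^ (k - 1) ≤ (j : ℕ)), X i j)
      = ∑ i ∈ Finset.univ.filter (fun i : Fin (2 ^ k) => 2 ^ (k - 1) ≤ (i : ℕ)),
          ∑ j ∈ Finset.univ.filter (fun j : Fin (2 ^ k) => (j : ℕ) < 2 ^ (k - 1)), X i j) := by
  simp only [hX, Multiset.sum_sum_card_filter_apply_eq_sum_map_card votes (fun v => ⇑v),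
    Finset.mem_filter, Finset.mem_univ, true_and, filter_filter]
  constructor <;> refine congrArg Multiset.sum (Multiset.map_congr rfl fun v hv => ?_)
  · exact ((hcomp v hv).card_quarters hk).1
  · exact ((hcomp v hv).card_quarters hk).2
end

section
/- A square matrix X of size 2^k × 2^k with nonnegative integer entries and all row and column sums equal to n is realizable by a balanced group-separable election compatible with the binary tree whose leaves in order correspond to the columns of X if and only if X is maximally-evenly-quartered. -/
def qidx (k : ℕ) (a : Bool) (i : Fin (2 ^ k)) : Fin (2 ^ (k + 1)) :=
  ⟨(if a then 2 ^ k else 0) + (i : ℕ), by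
    have h1 := i.isLt
    have h2 : (2 : ℕ) ^ (k + 1) = 2 ^ k * 2 := pow_succ 2 k
    split <;> omega⟩

def MaximallyEvenlyQuartered : (k : ℕ) → (Fin (2 ^ k) → Fin (2 ^ k) → ℕ) → Prop
  | 0, _ => True
  | k + 1, A =>
      ((∑ i, ∑ j, A (qidx k false i) (qidx k false j))
        = ∑ i, ∑ j, A (qidx k true i) (qidx k true j)) ∧
      ((∑ i, ∑ j, A (qidx k false i) (qidx k true j))
        = ∑ i, ∑ j, A (qidx k true i) (qidx k false j)) ∧
      (∀ a b : Bool,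
        MaximallyEvenlyQuartered k (fun i j => A (qidx k a i) (qidx k b j)))

open Finset Equiv

theorem Nat.div_eq_iff_mul_le_and_lt_succ_mul {x d t : ℕ} (hd : 0 < d) :
    x / d = t ↔ t * d ≤ x ∧ x < (t + 1) * d := by
  rw [Nat.div_eq_iff hd, Nat.succ_mul]
  omega

theorem Fin.val_div_two_pow_eq_zero {k j : ℕ} (p : Fin (2 ^ k)) (h : k ≤ j) :
    (p : ℕ) / 2 ^ j = 0 :=
  Nat.div_eq_of_lt (p.isLt.trans_le (Nat.pow_le_pow_right two_pos h))

theorem Fin.val_div_two_pow_lt {k j : ℕ} (p : Fin (2 ^ k)) (h : j ≤ k) :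
    (p : ℕ) / 2 ^ j < 2 ^ (k - j) :=
  (Nat.div_lt_iff_lt_mul (Nat.two_pow_pos j)).2 (by rw [pow_sub_mul_pow 2 h]; exact p.isLt)

theorem qidx_div_two_pow {k j : ℕ} (hj : j ≤ k) (a : Bool) (i : Fin (2 ^ k)) :
    (qidx k a i : ℕ) / 2 ^ j = (if a then 2 ^ (k - j) else 0) + (i : ℕ) / 2 ^ j := by
  cases a
  · simp [qidx]
  · simp only [qidx, if_true, ← pow_sub_mul_pow 2 hj, add_comm (2 ^ (k - j) * 2 ^ j),
      Nat.add_mul_div_right _ _ (Nat.two_pow_pos j)]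
    ring

theorem qidx_div_two_pow_eq_iff {k j : ℕ} (hj : j ≤ k) {a a' : Bool} {i i' : Fin (2 ^ k)} :
    (qidx k a i : ℕ) / 2 ^ j = (qidx k a' i' : ℕ) / 2 ^ j ↔
      a = a' ∧ (i : ℕ) / 2 ^ j = i' / 2 ^ j := by
  have hi := i.val_div_two_pow_lt hj
  have hi' := i'.val_div_two_pow_lt hj
  rw [qidx_div_two_pow hj, qidx_div_two_pow hj]
  generalize 2 ^ (k - j) = M, (i : ℕ) / 2 ^ j = x, (i' : ℕ) / 2 ^ j = x' at hi hi' ⊢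
  cases a <;> cases a' <;> simp <;> omega

theorem qidx_inj {k : ℕ} {a a' : Bool} {i i' : Fin (2 ^ k)} :
    qidx k a i = qidx k a' i' ↔ a = a' ∧ i = i' := by
  simpa [Fin.ext_iff] using
    qidx_div_two_pow_eq_iff (Nat.zero_le k) (a := a) (a' := a') (i := i) (i' := i')

def halfEquiv (k : ℕ) : Bool × Fin (2 ^ k) ≃ Fin (2 ^ (k + 1)) :=
  (boolProdEquivSum _).trans (finSumFinEquiv.trans (finCongr (by rw [pow_succ, mul_two])))

theorem halfEquiv_apply (k : ℕ) (x : Bool × Fin (2 ^ k)) : halfEquiv k x = qidx k x.1 x.2 := by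
  obtain ⟨_ | _, i⟩ := x <;> ext <;> simp [halfEquiv, qidx, add_comm]

theorem exists_qidx_eq {k : ℕ} (p : Fin (2 ^ (k + 1))) : ∃ a i, qidx k a i = p := by
  obtain ⟨⟨a, i⟩, rfl⟩ := (halfEquiv k).surjective p
  exact ⟨a, i, (halfEquiv_apply k (a, i)).symm⟩

theorem Fin.sum_two_pow_succ {M : Type*} [AddCommMonoid M] {k : ℕ} (f : Fin (2 ^ (k + 1)) → M) :
    ∑ p, f p = ∑ a, ∑ i, f (qidx k a i) := by
  rw [← (halfEquiv k).sum_comp, Fintype.sum_prod_type]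
  simp only [halfEquiv_apply]

def Equiv.Perm.PreservesDyadicBlocks {N : ℕ} (σ : Perm (Fin N)) : Prop :=
  ∀ (j : ℕ) (p q : Fin N), (p : ℕ) / 2 ^ j = q / 2 ^ j → (σ p : ℕ) / 2 ^ j = σ q / 2 ^ j

theorem balancedCompatible_iff_preservesDyadicBlocks {k : ℕ} {σ : Perm (Fin (2 ^ k))} :
    BalancedCompatible k σ ↔ σ.PreservesDyadicBlocks := by
  simp only [BalancedCompatible, ← Nat.div_eq_iff_mul_le_and_lt_succ_mul (Nat.two_pow_pos _)]
  constructor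
  · intro h j p q hpq
    rcases le_or_gt j k with hj | hj
    · obtain ⟨s, -, hs⟩ := h j hj (p / 2 ^ j) (p.val_div_two_pow_lt hj)
      rw [hs p rfl, hs q hpq.symm]
    · simp only [Fin.val_div_two_pow_eq_zero _ hj.le]
  · intro h j hj t ht
    have ht' : t * 2 ^ j < 2 ^ k :=
      pow_sub_mul_pow 2 hj ▸ Nat.mul_lt_mul_of_pos_right ht (Nat.two_pow_pos j)
    let p₀ : Fin (2 ^ k) := ⟨t * 2 ^ j, ht'⟩
    have hp₀ : (p₀ : ℕ) / 2 ^ j = t := Nat.mul_div_cancel t (Nat.two_pow_pos j)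
    exact ⟨σ p₀ / 2 ^ j, (σ p₀).val_div_two_pow_lt hj,
      fun p hp => h j p p₀ (hp.trans hp₀.symm)⟩

def blockPerm (k : ℕ) (b : Bool) (τ : Bool → Perm (Fin (2 ^ k))) : Perm (Fin (2 ^ (k + 1))) :=
  (halfEquiv k).permCongr
    (prodShear (Function.Involutive.toPerm (xor · b) fun a => by cases a <;> cases b <;> rfl) τ)

@[simp]
theorem blockPerm_qidx (k : ℕ) (b : Bool) (τ : Bool → Perm (Fin (2 ^ k))) (a : Bool)
    (i : Fin (2 ^ k)) : blockPerm k b τ (qidx k a i) = qidx k (xor a b) (τ a i) := by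
  have hsymm := (halfEquiv k).symm_apply_apply (a, i)
  rw [halfEquiv_apply] at hsymm
  simp only [blockPerm, permCongr_apply, hsymm, halfEquiv_apply, prodShear_apply]
  rfl

theorem preservesDyadicBlocks_blockPerm_iff {k : ℕ} {b : Bool}
    {τ : Bool → Perm (Fin (2 ^ k))} :
    (blockPerm k b τ).PreservesDyadicBlocks ↔ ∀ a, (τ a).PreservesDyadicBlocks := by
  simp only [Perm.PreservesDyadicBlocks]
  refine (forall_congr' fun j => ?_).trans forall_comm
  rcases le_or_gt j k with hj | hj
  · simp only [← (halfEquiv k).forall_congr_right, halfEquiv_apply, Prod.forall,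
      blockPerm_qidx, qidx_div_two_pow_eq_iff hj]
    constructor
    · exact fun h a p q hpq => (h a p a q ⟨rfl, hpq⟩).2
    · rintro h a p _ q ⟨rfl, hpq⟩
      exact ⟨rfl, h a p q hpq⟩
  · simp [Fin.val_div_two_pow_eq_zero _ hj.le, Fin.val_div_two_pow_eq_zero _ hj]

theorem Equiv.Perm.PreservesDyadicBlocks.exists_eq_blockPerm {k : ℕ}
    {σ : Perm (Fin (2 ^ (k + 1)))} (h : σ.PreservesDyadicBlocks) :
    ∃ b τ, σ = blockPerm k b τ := by
  let e := halfEquiv k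
  let ρ : Perm (Bool × Fin (2 ^ k)) := e.trans (σ.trans e.symm)
  have hρ : ∀ x, σ (e x) = qidx k (ρ x).1 (ρ x).2 := fun x => by
    rw [← halfEquiv_apply]
    exact (e.apply_symm_apply _).symm
  have hsame_half : ∀ {a a' : Bool} {i i' : Fin (2 ^ k)},
      (qidx k a i : ℕ) / 2 ^ k = (qidx k a' i' : ℕ) / 2 ^ k ↔ a = a' := by
    simp [qidx_div_two_pow_eq_iff le_rfl, Fin.val_div_two_pow_eq_zero]
  have hfst : ∀ a i i', (ρ (a, i)).1 = (ρ (a, i')).1 := fun a i i' => by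
    have key := h k (e (a, i)) (e (a, i')) (by simp [e, halfEquiv_apply, hsame_half])
    rwa [hρ, hρ, hsame_half] at key
  have hne : (ρ (false, 0)).1 ≠ (ρ (true, 0)).1 := by
    intro heq
    obtain ⟨⟨a, i⟩, hx⟩ := ρ.surjective (!(ρ (false, 0)).1, 0)
    have hx1 := congrArg Prod.fst hx
    have ha : (ρ (a, i)).1 = (ρ (false, 0)).1 := by
      rw [hfst a i 0]
      cases a
      exacts [rfl, heq.symm]
    simp [ha] at hx1
  obtain ⟨b, hb⟩ : ∃ b, (ρ (false, 0)).1 = b := ⟨_, rfl⟩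
  have hxor : ∀ a i, (ρ (a, i)).1 = xor a b := fun a i => by
    rw [hfst a i 0]
    cases a
    · simpa using hb
    · simpa using Bool.eq_not_of_ne (hb ▸ hne).symm
  have hinj : ∀ a, Function.Injective fun i => (ρ (a, i)).2 := fun a i i' hii' => by
    simpa using ρ.injective (Prod.ext (hfst a i i') hii')
  refine ⟨b, fun a => .ofBijective _ (Finite.injective_iff_bijective.mp (hinj a)), ?_⟩
  refine Equiv.ext fun p => ?_
  obtain ⟨⟨a, i⟩, rfl⟩ := e.surjective p
  rw [hρ, hxor, show e (a, i) = qidx k a i from halfEquiv_apply k (a, i), blockPerm_qidx]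
  rfl

namespace MaximallyEvenlyQuartered

theorem zero (k : ℕ) : MaximallyEvenlyQuartered k 0 := by
  induction k with
  | zero => trivial
  | succ k ih => exact ⟨by simp, by simp, fun _ _ => ih⟩

theorem add {k : ℕ} {A B : Fin (2 ^ k) → Fin (2 ^ k) → ℕ}
    (hA : MaximallyEvenlyQuartered k A) (hB : MaximallyEvenlyQuartered k B) :
    MaximallyEvenlyQuartered k (A + B) := by
  induction k with
  | zero => trivial
  | succ k ih =>
    obtain ⟨hA₁, hA₂, hA₃⟩ := hA
    obtain ⟨hB₁, hB₂, hB₃⟩ := hB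
    refine ⟨?_, ?_, fun a b => ih (hA₃ a b) (hB₃ a b)⟩ <;>
      simp only [Pi.add_apply, sum_add_distrib] <;> omega

theorem two_pow_mul_sum_row {k : ℕ} {A : Fin (2 ^ k) → Fin (2 ^ k) → ℕ}
    (h : MaximallyEvenlyQuartered k A) (i : Fin (2 ^ k)) :
    2 ^ k * ∑ j, A i j = ∑ i, ∑ j, A i j := by
  induction k with
  | zero =>
    have : Subsingleton (Fin (2 ^ 0)) := Fin.subsingleton_one
    rw [Fintype.sum_subsingleton (fun i' => ∑ j, A i' j) i]
    exact Nat.one_mul _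
  | succ k ih =>
    obtain ⟨h₁, h₂, h₃⟩ := h
    let T a c := ∑ i, ∑ j, A (qidx k a i) (qidx k c j)
    have hhalf_row : ∀ a i, 2 ^ k * ∑ j, A (qidx k a i) j = T a false + T a true :=
      fun a i => by
      rw [Fin.sum_two_pow_succ, mul_sum, Fintype.sum_bool, ih (h₃ a true), ih (h₃ a false),
        add_comm]
    have htotal :
        ∑ i, ∑ j, A i j = (T false false + T false true) + (T true false + T true true) := by
      simp only [T, Fin.sum_two_pow_succ, sum_add_distrib, Fintype.sum_bool]
      ring
    obtain ⟨a, i, rfl⟩ := exists_qidx_eq i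
    rw [show 2 ^ (k + 1) * ∑ j, A (qidx k a i) j = 2 * (2 ^ k * ∑ j, A (qidx k a i) j) by ring,
      hhalf_row, htotal]
    cases a <;> simp only [T] at h₁ h₂ ⊢ <;> omega

end MaximallyEvenlyQuartered

theorem Equiv.Perm.PreservesDyadicBlocks.maximallyEvenlyQuartered {k : ℕ}
    {σ : Perm (Fin (2 ^ k))} (h : σ.PreservesDyadicBlocks) :
    MaximallyEvenlyQuartered k fun i j => if σ i = j then 1 else 0 := by
  induction k with
  | zero => trivial
  | succ k ih =>
    obtain ⟨b, τ, rfl⟩ := h.exists_eq_blockPerm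
    have hτ := preservesDyadicBlocks_blockPerm_iff.mp h
    have hquarter : ∀ a c : Bool,
        (fun i j => if blockPerm k b τ (qidx k a i) = qidx k c j then 1 else 0) =
          if xor a b = c then (fun i j => if τ a i = j then 1 else 0) else 0 := fun a c => by
      ext i j
      split_ifs <;> simp_all [qidx_inj]
    have hsum : ∀ a c : Bool,
        ∑ i, ∑ j, (if blockPerm k b τ (qidx k a i) = qidx k c j then 1 else 0) =
          if xor a b = c then 2 ^ k else 0 := fun a c => by
      simp only [blockPerm_qidx, qidx_inj]
      split_ifs with hc <;> simp [hc]
    refine ⟨?_, ?_, fun a c => ?_⟩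
    · rw [hsum, hsum]; cases b <;> rfl
    · rw [hsum, hsum]; cases b <;> rfl
    · rw [hquarter]
      split_ifs
      exacts [ih (hτ a), MaximallyEvenlyQuartered.zero k]

theorem maximallyEvenlyQuartered_card_filter {k : ℕ} (votes : Multiset (Perm (Fin (2 ^ k))))
    (h : ∀ v ∈ votes, v.PreservesDyadicBlocks) :
    MaximallyEvenlyQuartered k fun i j => (votes.filter fun v => v i = j).card := by
  induction votes using Multiset.induction_on with
  | empty => exact MaximallyEvenlyQuartered.zero k
  | cons v votes ih =>
    have hv := (h v (Multiset.mem_cons_self v votes)).maximallyEvenlyQuartered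
    convert hv.add (ih fun w hw => h w (Multiset.mem_cons_of_mem hw)) using 1
    ext i j
    rw [Pi.add_apply, Pi.add_apply, Multiset.filter_cons, Multiset.card_add]
    split_ifs <;> simp

theorem MaximallyEvenlyQuartered.exists_realizing_perms {k n : ℕ}
    {X : Fin (2 ^ k) → Fin (2 ^ k) → ℕ} (hX : MaximallyEvenlyQuartered k X)
    (hrow : ∀ i, ∑ j, X i j = n) :
    ∃ v : Fin n → Perm (Fin (2 ^ k)),
      (∀ t, (v t).PreservesDyadicBlocks) ∧ ∀ i j, #{t | v t i = j} = X i j := by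
  induction k generalizing n with
  | zero =>
    have : Subsingleton (Fin (2 ^ 0)) := Fin.subsingleton_one
    refine ⟨fun _ => 1, fun _ _ _ _ hpq => hpq, fun i j => ?_⟩
    obtain rfl := Subsingleton.elim i j
    rw [← hrow i, Fintype.sum_subsingleton _ i]
    simp
  | succ k ih =>
    obtain ⟨h₁, h₂, h₃⟩ := hX
    -- the quarter `(a, xor a d)` is diagonal for `d = false` and antidiagonal for `d = true`
    let r (d : Bool) := ∑ j, X (qidx k false 0) (qidx k d j)
    have hquarter_row : ∀ a d i, ∑ j, X (qidx k a i) (qidx k (xor a d) j) = r d := by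
      intro a d i
      apply Nat.eq_of_mul_eq_mul_left (Nat.two_pow_pos k)
      rw [(h₃ a (xor a d)).two_pow_mul_sum_row i, (h₃ false d).two_pow_mul_sum_row 0]
      cases a <;> cases d <;> simp [h₁, h₂]
    have hn : r false + r true = n := by
      rw [← hrow (qidx k false 0), Fin.sum_two_pow_succ (X _), Fintype.sum_bool, add_comm]
    choose u hu hcount using fun a d => ih (h₃ a (xor a d)) (hquarter_row a d)
    subst hn
    refine ⟨Fin.append (fun t => blockPerm k false fun a => u a false t)
      (fun t => blockPerm k true fun a => u a true t), ?_, ?_⟩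
    · refine Fin.addCases (fun t => ?_) (fun t => ?_) <;>
        simp only [Fin.append_left, Fin.append_right] <;>
        exact preservesDyadicBlocks_blockPerm_iff.mpr fun a => hu a _ t
    · intro p q
      obtain ⟨a, i, rfl⟩ := exists_qidx_eq p
      obtain ⟨c, j, rfl⟩ := exists_qidx_eq q
      obtain ⟨d, rfl⟩ : ∃ d, c = xor a d := ⟨xor a c, by simp⟩
      rw [← hcount a d i j, card_filter, card_filter, Fin.sum_univ_add]
      simp only [Fin.append_left, Fin.append_right, blockPerm_qidx, qidx_inj]
      cases a <;> cases d <;> simp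

theorem balanced_gs_realizable_iff_meq_general (k n : ℕ)
    (X : Fin (2 ^ k) → Fin (2 ^ k) → ℕ)
    (hrow : ∀ i : Fin (2 ^ k), ∑ j, X i j = n) :
    (∃ votes : Multiset (Equiv.Perm (Fin (2 ^ k))),
        Multiset.card votes = n ∧
        (∀ v ∈ votes, BalancedCompatible k v) ∧
        ∀ i j, (votes.filter (fun v => v i = j)).card = X i j)
      ↔ MaximallyEvenlyQuartered k X := by
  simp only [balancedCompatible_iff_preservesDyadicBlocks]
  constructor
  · rintro ⟨votes, -, hvotes, hX⟩
    convert maximallyEvenlyQuartered_card_filter votes hvotes with i j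
    exact (hX i j).symm
  · intro hX
    obtain ⟨v, hv, hcount⟩ := hX.exists_realizing_perms hrow
    refine ⟨univ.val.map v, by simp, by simpa using hv, fun i j => ?_⟩
    rw [Multiset.filter_map, Multiset.card_map, ← hcount i j]
    rfl

/-- a `2^k × 2^k` nonnegative integer matrix with all row and column
sums equal to `n` is realizable by a balanced group-separable election compatible
with the complete binary tree whose leaves in order correspond to the columns iff it
is maximally-evenly-quartered. -/
theorem balanced_gs_realizable_iff_meq (k n : ℕ)
    (X : Fin (2 ^ k) → Fin (2 ^ k) → ℕ)
    (hrow : ∀ i : Fin (2 ^ k), ∑ j, X i j = n)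
    (hcol : ∀ j : Fin (2 ^ k), ∑ i, X i j = n) :
    (∃ votes : Multiset (Equiv.Perm (Fin (2 ^ k))),
        Multiset.card votes = n ∧
        (∀ v ∈ votes, BalancedCompatible k v) ∧
        ∀ i j, (votes.filter (fun v => v i = j)).card = X i j)
      ↔ MaximallyEvenlyQuartered k X :=
  balanced_gs_realizable_iff_meq_general k n X hrow
end

section
/- Necessary condition for a Condorcet winner given a position matrix: let X be an m×m nonnegative-integer position matrix with all row and column sums equal to n, and suppose there exists an election E with n voters realizing X in which candidate c (a column index) is a Condorcet winner. Then for every i ∈ {1,...,m} and every subset S of column indices with c ∉ S: Σ_{j∈S} Σ_{k=1}^{i} X_{k,j} ≤ |S|·⌊(n−1)/2⌋ + Σ_{k=1}^{i−1} X_{k,c}·min(|S|, i−k). -/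
/-!
Count, for each `j ∈ S`, the votes placing `j` at a position `≤ i`, and split them by whether `j`
is ranked above or below `c`. Since `c` beats `j`, at most `⌊(n - 1)/2⌋` votes rank `j` above `c`.
A vote with `c` at position `k < i` has only the `i - k` positions `k + 1, …, i` below `c` and not
below `i`, so it places at most `min |S| (i - k)` candidates of `S` there.
-/

/-- `c` is a Condorcet winner: for every other candidate `d`, strictly more than half
of the voters rank `c` at an earlier (smaller) position than `d`. Votes map positions
to candidates, so the position of candidate `c` in vote `v` is `v.symm c`. -/
def CondorcetWinner (m : ℕ) (votes : Multiset (Equiv.Perm (Fin m))) (c : Fin m) : Prop :=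
  ∀ d : Fin m, d ≠ c →
    Multiset.card votes < 2 * (votes.filter (fun v => v.symm c < v.symm d)).card

namespace Multiset

variable {α β : Type*} (s : Multiset α)

lemma card_filter_eq_sum_map_ite (p : α → Prop) [DecidablePred p] :
    (s.filter p).card = (s.map fun a => if p a then 1 else 0).sum := by
  induction s using Multiset.induction_on with
  | empty => simp
  | cons a s ih => by_cases h : p a <;> simp [h, ih, add_comm]

lemma card_filter_le_card_filter_add_card_filter {p q r : α → Prop}
    [DecidablePred p] [DecidablePred q] [DecidablePred r] (h : ∀ a ∈ s, p a → q a ∨ r a) :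
    (s.filter p).card ≤ (s.filter q).card + (s.filter r).card := by
  simp only [card_filter_eq_sum_map_ite, ← sum_map_add]
  refine sum_map_le_sum_map _ _ fun a ha => ?_
  have := h a ha
  split_ifs <;> simp_all

lemma sum_card_filter_eq_sum_map_card_filter (T : Finset β) (p : β → α → Prop)
    [∀ b a, Decidable (p b a)] :
    ∑ b ∈ T, (s.filter (p b)).card = (s.map fun a => (T.filter (p · a)).card).sum := by
  simp only [card_filter_eq_sum_map_ite, Finset.card_filter]
  exact (sum_map_sum_map _ _).symm

lemma card_filter_mem_eq_sum_card_filter_eq [DecidableEq β] (f : α → β) (T : Finset β) :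
    (s.filter (f · ∈ T)).card = ∑ b ∈ T, (s.filter (f · = b)).card := by
  rw [sum_card_filter_eq_sum_map_card_filter, card_filter_eq_sum_map_ite]
  simp [Finset.filter_eq, apply_ite]

lemma sum_map_comp_eq_sum_card_filter_mul [Fintype β] [DecidableEq β] (f : α → β) (g : β → ℕ) :
    (s.map fun a => g (f a)).sum = ∑ b, (s.filter (f · = b)).card * g b := by
  simp only [card_filter_eq_sum_map_ite, ← sum_map_mul_right, ite_mul, one_mul, zero_mul,
    ← sum_map_sum, Finset.sum_ite_eq, Finset.mem_univ, if_true]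

end Multiset

section Election

variable {m : ℕ}

lemma card_filter_symm_apply_eq (votes : Multiset (Equiv.Perm (Fin m))) (j k : Fin m) :
    (votes.filter fun v => v.symm j = k).card = (votes.filter fun v => v k = j).card := by
  congr 1
  exact Multiset.filter_congr fun v _ => by rw [Equiv.symm_apply_eq, eq_comm]

lemma CondorcetWinner.card_filter_lt_le {votes : Multiset (Equiv.Perm (Fin m))} {c : Fin m}
    (hcw : CondorcetWinner m votes c) {d : Fin m} (hd : d ≠ c) :
    (votes.filter fun v => v.symm d < v.symm c).card ≤ (Multiset.card votes - 1) / 2 := by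
  have hsplit := Multiset.card_eq_countP_add_countP (fun v => v.symm c < v.symm d) votes
  have hnot : (votes.countP fun v => ¬v.symm c < v.symm d) =
      (votes.filter fun v => v.symm d < v.symm c).card := by
    rw [Multiset.countP_eq_card_filter]
    congr 1
    refine Multiset.filter_congr fun v _ => ?_
    rw [not_lt, le_iff_lt_or_eq, or_iff_left (fun h => hd (v.symm.injective h))]
  have := hcw d hd
  rw [Multiset.countP_eq_card_filter] at hsplit
  omega

lemma card_filter_lt_symm_apply_le_le (v : Equiv.Perm (Fin m)) (S : Finset (Fin m)) (c i : Fin m) :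
    (S.filter fun j => v.symm c < v.symm j ∧ v.symm j ≤ i).card ≤ min S.card (i - v.symm c) := by
  refine le_min (Finset.card_filter_le _ _) ?_
  calc (S.filter fun j => v.symm c < v.symm j ∧ v.symm j ≤ i).card
      ≤ (Finset.Ioc (v.symm c) i).card :=
        Finset.card_le_card_of_injOn v.symm (fun j hj => by simpa using (Finset.mem_filter.1 hj).2)
          v.symm.injective.injOn
    _ = i - v.symm c := Fin.card_Ioc _ _

lemma sum_card_filter_lt_symm_apply_le_le (votes : Multiset (Equiv.Perm (Fin m)))
    (S : Finset (Fin m)) (c i : Fin m) :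
    ∑ j ∈ S, (votes.filter fun v => v.symm c < v.symm j ∧ v.symm j ≤ i).card ≤
      ∑ k ∈ Finset.univ.filter (· < i),
        (votes.filter fun v => v.symm c = k).card * min S.card (i - k) := by
  rw [Multiset.sum_card_filter_eq_sum_map_card_filter, Finset.sum_filter_of_ne]
  · calc _ ≤ (votes.map fun v => min S.card (i - v.symm c)).sum :=
          Multiset.sum_map_le_sum_map _ _ fun v _ => card_filter_lt_symm_apply_le_le v S c i
      _ = _ := votes.sum_map_comp_eq_sum_card_filter_mul (fun v => v.symm c)
          (fun k => min S.card (i - (k : ℕ)))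
  · intro k _ hk
    by_contra hki
    simp_all [Nat.sub_eq_zero_of_le (Fin.le_def.mp (not_lt.mp hki))]

end Election

theorem condorcet_necessary_condition_general (m n : ℕ) (X : Fin m → Fin m → ℕ)
    (votes : Multiset (Equiv.Perm (Fin m))) (hn : Multiset.card votes = n)
    (hreal : ∀ i j : Fin m, (votes.filter (fun v => v i = j)).card = X i j)
    (c : Fin m) (hcw : CondorcetWinner m votes c) :
    ∀ i : Fin m, ∀ S : Finset (Fin m), c ∉ S →
      (∑ j ∈ S, ∑ k ∈ Finset.univ.filter (fun k : Fin m => k ≤ i), X k j)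
        ≤ S.card * ((n - 1) / 2) +
          ∑ k ∈ Finset.univ.filter (fun k : Fin m => k < i),
            X k c * min S.card ((i : ℕ) - (k : ℕ)) := by
  intro i S hcS
  have hX : ∀ j k, X k j = (votes.filter fun v => v.symm j = k).card := fun j k => by
    rw [card_filter_symm_apply_eq, hreal]
  have hne : ∀ j ∈ S, j ≠ c := fun j hj hjc => hcS (hjc ▸ hj)
  calc ∑ j ∈ S, ∑ k ∈ Finset.univ.filter (· ≤ i), X k j
      = ∑ j ∈ S, (votes.filter fun v => v.symm j ≤ i).card := by
        simp only [hX, ← Multiset.card_filter_mem_eq_sum_card_filter_eq, Finset.mem_filter,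
          Finset.mem_univ, true_and]
    _ ≤ ∑ j ∈ S, ((votes.filter fun v => v.symm j < v.symm c).card +
          (votes.filter fun v => v.symm c < v.symm j ∧ v.symm j ≤ i).card) :=
        Finset.sum_le_sum fun j hj => votes.card_filter_le_card_filter_add_card_filter
          fun v _ hji => (lt_or_gt_of_ne fun h => hne j hj (v.symm.injective h)).imp_right
            (⟨·, hji⟩)
    _ = ∑ j ∈ S, (votes.filter fun v => v.symm j < v.symm c).card +
          ∑ j ∈ S, (votes.filter fun v => v.symm c < v.symm j ∧ v.symm j ≤ i).card :=
        Finset.sum_add_distrib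
    _ ≤ S.card * ((n - 1) / 2) + ∑ k ∈ Finset.univ.filter (· < i), X k c * min S.card (i - k) := by
      gcongr
      · exact Finset.sum_le_card_nsmul _ _ _ fun j hj => hn ▸ hcw.card_filter_lt_le (hne j hj)
      · simpa only [hX] using sum_card_filter_lt_symm_apply_le_le votes S c i

/-- necessary condition for a Condorcet winner given a position matrix. -/
theorem condorcet_necessary_condition (m n : ℕ) (X : Fin m → Fin m → ℕ)
    (hrow : ∀ i : Fin m, ∑ j, X i j = n)
    (hcol : ∀ j : Fin m, ∑ i, X i j = n)
    (votes : Multiset (Equiv.Perm (Fin m))) (hn : Multiset.card votes = n)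
    (hreal : ∀ i j : Fin m, (votes.filter (fun v => v i = j)).card = X i j)
    (c : Fin m) (hcw : CondorcetWinner m votes c) :
    ∀ i : Fin m, ∀ S : Finset (Fin m), c ∉ S →
      (∑ j ∈ S, ∑ k ∈ Finset.univ.filter (fun k : Fin m => k ≤ i), X k j)
        ≤ S.card * ((n - 1) / 2) +
          ∑ k ∈ Finset.univ.filter (fun k : Fin m => k < i),
            X k c * min S.card ((i : ℕ) - (k : ℕ)) :=
  condorcet_necessary_condition_general m n X votes hn hreal c hcw
end

section
/- All votes in the X3C-hardness domain are single-peaked: each vote obtained from c_1 ≻ c_2 ≻ ... ≻ c_{6m} by swapping disjoint adjacent pairs of the form (c_{2i}, c_{2i+1}) for i in some subset of [3m−1] is single-peaked with respect to the axis c_{6m−1} ▷ c_{6m−3} ▷ ... ▷ c_3 ▷ c_1 ▷ c_2 ▷ c_4 ▷ ... ▷ c_{6m}. -/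
/-- Single-peakedness of vote `v` with respect to axis `ax`. -/
def IsSinglePeakedWrt (m : ℕ) (ax v : Equiv.Perm (Fin m)) : Prop :=
  ∀ ℓ : ℕ, ∀ x y z : Fin m, x ≤ y → y ≤ z →
    ((v.symm (ax x) : ℕ) < ℓ) → ((v.symm (ax z) : ℕ) < ℓ) → ((v.symm (ax y) : ℕ) < ℓ)

/-- The rank/swap function on naturals. -/
def Fb (B : Finset ℕ) (n : ℕ) : ℕ :=
  if n % 2 = 1 ∧ (n + 1) / 2 ∈ B then n + 1
  else if n % 2 = 0 ∧ 0 < n ∧ n / 2 ∈ B then n - 1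
  else n

lemma Fb_even_bounds (B : Finset ℕ) (n : ℕ) (he : n % 2 = 0) :
    n - 1 ≤ Fb B n ∧ Fb B n ≤ n := by
  unfold Fb
  split_ifs with h1 h2
  · exact absurd h1.1 (by omega)
  · omega
  · omega

lemma Fb_odd_bounds (B : Finset ℕ) (n : ℕ) (ho : n % 2 = 1) :
    n ≤ Fb B n ∧ Fb B n ≤ n + 1 := by
  unfold Fb
  split_ifs with h1 h2
  · omega
  · exact absurd h2.1 (by omega)
  · omega

lemma Fb_Fb (B : Finset ℕ) (n : ℕ) : Fb B (Fb B n) = n := by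
  rcases Nat.even_or_odd n with he | ho
  · have he' : n % 2 = 0 := Nat.even_iff.mp he
    by_cases h : 0 < n ∧ n / 2 ∈ B
    · have h1 : Fb B n = n - 1 := by
        unfold Fb
        rw [if_neg (by rintro ⟨h', _⟩; omega), if_pos ⟨he', h.1, h.2⟩]
      rw [h1]
      unfold Fb
      rw [if_pos ⟨by omega, by
        have hn : n - 1 + 1 = n := by omega
        rw [hn]; exact h.2⟩]
      omega
    · have h1 : Fb B n = n := by
        unfold Fb
        rw [if_neg (by rintro ⟨h', _⟩; omega),
            if_neg (by rintro ⟨_, h2, h3⟩; exact h ⟨h2, h3⟩)]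
      rw [h1, h1]
  · have ho' : n % 2 = 1 := Nat.odd_iff.mp ho
    by_cases h : (n + 1) / 2 ∈ B
    · have h1 : Fb B n = n + 1 := by
        unfold Fb
        rw [if_pos ⟨ho', h⟩]
      rw [h1]
      unfold Fb
      rw [if_neg (by rintro ⟨h2, _⟩; omega), if_pos ⟨by omega, by omega, h⟩]
      omega
    · have h1 : Fb B n = n := by
        unfold Fb
        rw [if_neg (by rintro ⟨_, hb⟩; exact h hb),
            if_neg (by rintro ⟨h2, _⟩; omega)]
      rw [h1, h1]

/-- every vote obtained from `c_1 ≻ c_2 ≻ … ≻ c_{6m}` by swapping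
disjoint adjacent pairs `(c_{2i}, c_{2i+1})` for `i` in some subset `B ⊆ [3m−1]`
(1-indexed; candidates are 0-indexed, so pair `i` swaps candidates `2i−1` and `2i`)
is single-peaked with respect to the axis
`c_{6m−1} ▷ c_{6m−3} ▷ … ▷ c_3 ▷ c_1 ▷ c_2 ▷ c_4 ▷ … ▷ c_{6m}`. -/
theorem x3c_votes_single_peaked (m : ℕ) (hm : 1 ≤ m)
    (B : Finset ℕ) (hB : ∀ i ∈ B, 1 ≤ i ∧ i ≤ 3 * m - 1)
    (ax : Equiv.Perm (Fin (6 * m)))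
    (hax : ∀ t : Fin (6 * m), ((ax t : Fin (6 * m)) : ℕ) =
      if (t : ℕ) < 3 * m then 6 * m - 2 - 2 * (t : ℕ)
      else 2 * ((t : ℕ) - 3 * m) + 1)
    (v : Equiv.Perm (Fin (6 * m)))
    (hv : ∀ p : Fin (6 * m), ((v p : Fin (6 * m)) : ℕ) =
      if (p : ℕ) % 2 = 1 ∧ ((p : ℕ) + 1) / 2 ∈ B then (p : ℕ) + 1
      else if (p : ℕ) % 2 = 0 ∧ 0 < (p : ℕ) ∧ (p : ℕ) / 2 ∈ B then (p : ℕ) - 1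
      else (p : ℕ)) :
    IsSinglePeakedWrt (6 * m) ax v := by
  have hFb : ∀ p : Fin (6 * m), ((v p : Fin (6 * m)) : ℕ) = Fb B (p : ℕ) := by
    intro p; rw [hv p]; rfl
  have hinv : ∀ c : Fin (6 * m), v (v c) = c := by
    intro c
    apply Fin.ext
    rw [hFb, hFb, Fb_Fb]
  have hsym : ∀ c : Fin (6 * m), ((v.symm c : Fin (6 * m)) : ℕ) = Fb B (c : ℕ) := by
    intro c
    have h : v.symm c = v c := by
      conv_lhs => rw [← hinv c]
      rw [Equiv.symm_apply_apply]
    rw [h, hFb]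
  have hrank : ∀ t : Fin (6 * m), ((v.symm (ax t) : Fin (6 * m)) : ℕ)
      = Fb B (if (t : ℕ) < 3 * m then 6 * m - 2 - 2 * (t : ℕ)
              else 2 * ((t : ℕ) - 3 * m) + 1) := by
    intro t; rw [hsym, hax]
  intro ℓ x y z hxy hyz hxℓ hzℓ
  rw [hrank] at hxℓ hzℓ ⊢
  have hxy' : (x : ℕ) ≤ (y : ℕ) := hxy
  have hyz' : (y : ℕ) ≤ (z : ℕ) := hyz
  by_cases hy : (y : ℕ) < 3 * m
  · have hx : (x : ℕ) < 3 * m := lt_of_le_of_lt hxy' hy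
    rw [if_pos hy]
    rw [if_pos hx] at hxℓ
    rcases Nat.eq_or_lt_of_le hxy' with heq | hlt
    · rw [← heq]; exact hxℓ
    · have b1 := Fb_even_bounds B (6 * m - 2 - 2 * (y : ℕ)) (by omega)
      have b2 := Fb_even_bounds B (6 * m - 2 - 2 * (x : ℕ)) (by omega)
      omega
  · push_neg at hy
    have hz : ¬ (z : ℕ) < 3 * m := by omega
    rw [if_neg (by omega)]
    rw [if_neg hz] at hzℓ
    rcases Nat.eq_or_lt_of_le hyz' with heq | hlt
    · rw [heq]; exact hzℓ
    · have b1 := Fb_odd_bounds B (2 * ((y : ℕ) - 3 * m) + 1) (by omega)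
      have b2 := Fb_odd_bounds B (2 * ((z : ℕ) - 3 * m) + 1) (by omega)
      omega
end
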